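/- In the mod 2 lambda algebra, let λ_I = λ_{I(1)}···λ_{I(s)} be an admissible monomial of length s ≥ 1, and write λ_i λ_I as a sum of admissible monomials λ_J of length s+1. Then every such λ_J satisfies i + J(1) + ⋯ + J(s) ≥ J(s+1). -/

import Mathlib

/-- The defining relations of the mod 2 lambda algebra:
`λ_i λ_{2i+1+j} = Σ_{t≥0} C(j−t−1, t) λ_{i+j−t} λ_{2i+1+t}` (coefficients mod 2). -/
inductive LambdaRel : FreeAlgebra (ZMod 2) ℕ → FreeAlgebra (ZMod 2) ℕ → Prop
  | adem (i j : ℕ) :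
      LambdaRel (FreeAlgebra.ι (ZMod 2) i * FreeAlgebra.ι (ZMod 2) (2 * i + 1 + j))
        (∑ t ∈ Finset.range j, ((Nat.choose (j - t - 1) t : ZMod 2) •
          (FreeAlgebra.ι (ZMod 2) (i + j - t) * FreeAlgebra.ι (ZMod 2) (2 * i + 1 + t))))

/-- The mod 2 lambda algebra `Λ`. -/
def LambdaAlg : Type := RingQuot LambdaRel

noncomputable instance : Ring LambdaAlg :=
  inferInstanceAs (Ring (RingQuot LambdaRel))

/-- The generator `λ_i` of the lambda algebra. -/
noncomputable def lam (i : ℕ) : LambdaAlg :=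
  RingQuot.mkRingHom LambdaRel (FreeAlgebra.ι (ZMod 2) i)

/-- The monomial `λ_{I(1)} ⋯ λ_{I(s)}` associated to a list `I`. -/
noncomputable def lamProd (I : List ℕ) : LambdaAlg := (I.map lam).prod

/-- A monomial `λ_{I(1)} ⋯ λ_{I(s)}` is admissible if `2 I(r) ≥ I(r+1)` for all `r`. -/
def LambdaAdmissible (I : List ℕ) : Prop := I.Chain' (fun a b => b ≤ 2 * a)

/-!
Induct on the index sum of `I`. If `I(1) ≤ 2i`, then `λ_i λ_I` is already admissible. Otherwise
`I(1) = 2i+1+j`, and the relation turns `λ_i λ_{I(1)}` into a sum of terms `λ_{i+j-t} λ_{2i+1+t}` with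
`2t+1 ≤ j`, since the other binomial coefficients vanish. By induction we first expand
`λ_{2i+1+t} λ_{I(2)} ⋯ λ_{I(s)}` and then `λ_{i+j-t}` times each monomial of the result; both
products have smaller index sum. The claim reads `2 J(s+1) ≤ 2i + ΣI`, because the index sum is
preserved. It passes through this recursion together with `J(s+1) ≤ I(s)`: the last index never
grows, and `2(2i+1+t) ≤ 2i + I(1)`.
-/

open Submodule

theorem Submodule.exists_finset_sum_eq_of_mem_span_image_zmod_two {α M : Type*} [AddCommGroup M]
    [Module (ZMod 2) M] {f : α → M} {s : Set α} {x : M} (hx : x ∈ span (ZMod 2) (f '' s)) :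
    ∃ S : Finset α, ↑S ⊆ s ∧ x = ∑ a ∈ S, f a := by
  obtain ⟨l, hl, rfl⟩ := Finsupp.mem_span_image_iff_linearCombination _ |>.1 hx
  refine ⟨l.support, hl, ?_⟩
  rw [Finsupp.linearCombination_apply, Finsupp.sum]
  refine Finset.sum_congr rfl fun a ha => ?_
  have h2 : ∀ c : ZMod 2, c ≠ 0 → c = 1 := by decide
  rw [h2 _ (Finsupp.mem_support_iff.1 ha), one_smul]

theorem Submodule.apply_mem_of_mem_span_image {R M N α : Type*} [Semiring R] [AddCommMonoid M]
    [Module R M] [AddCommMonoid N] [Module R N] (g : M →ₗ[R] N) {f : α → M} {s : Set α}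
    {p : Submodule R N} {x : M} (hx : x ∈ span R (f '' s)) (h : ∀ a ∈ s, g (f a) ∈ p) :
    g x ∈ p :=
  span_le (p := p.comap g) |>.2 (Set.forall_mem_image.2 h) hx

theorem List.getLastD_eq_getLastD_of_ne_nil {α : Type*} {l : List α} (h : l ≠ []) (d d' : α) :
    l.getLastD d = l.getLastD d' := by
  cases l with
  | nil => contradiction
  | cons b l => simp only [List.getLastD_cons]

theorem List.getLastD_mono_default {α : Type*} [Preorder α] {l : List α} {d d' : α} (h : d ≤ d') :
    l.getLastD d ≤ l.getLastD d' := by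
  cases l with
  | nil => simpa using h
  | cons b l => simp only [List.getLastD_cons, le_refl]

theorem List.sum_dropLast_add_getLastD {M : Type*} [AddMonoid M] {l : List M} (h : l ≠ [])
    (d : M) :
    l.dropLast.sum + l.getLastD d = l.sum := by
  conv_rhs => rw [← List.dropLast_append_getLast h]
  simp [List.getLastD_eq_getLast?, List.getLast?_eq_some_getLast h]

noncomputable instance : Algebra (ZMod 2) LambdaAlg :=
  inferInstanceAs (Algebra (ZMod 2) (RingQuot LambdaRel))

theorem LambdaAdmissible.getLastD_le_add_sum_dropLast :
    ∀ {x : ℕ} {l : List ℕ}, LambdaAdmissible (x :: l) → l.getLastD x ≤ x + (x :: l).dropLast.sum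
  | x, [], _ => by simp
  | x, y :: l, h => by
    obtain ⟨hxy, hl⟩ := List.isChain_cons_cons.1 h
    have := getLastD_le_add_sum_dropLast hl
    rw [List.getLastD_cons, List.dropLast_cons_cons, List.sum_cons]
    omega

theorem lamProd_cons (a : ℕ) (l : List ℕ) : lamProd (a :: l) = lam a * lamProd l := by
  simp [lamProd]

theorem lam_eq_mkAlgHom (k : ℕ) :
    lam k = RingQuot.mkAlgHom (ZMod 2) LambdaRel (FreeAlgebra.ι (ZMod 2) k) := by
  rw [lam, ← RingQuot.mkAlgHom_coe (ZMod 2) LambdaRel]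
  rfl

theorem lam_mul_lam_adem (m j : ℕ) :
    lam m * lam (2 * m + 1 + j) = ∑ t ∈ Finset.range j,
      ((Nat.choose (j - t - 1) t : ZMod 2) • (lam (m + j - t) * lam (2 * m + 1 + t))) := by
  have h := RingQuot.mkAlgHom_rel (ZMod 2) (LambdaRel.adem m j)
  simp only [map_mul, map_sum, map_smul] at h
  simp only [lam_eq_mkAlgHom]
  exact h

/-- `J` is an admissible monomial that may occur in `λ_m λ_L`. -/
structure IsLamTerm (m : ℕ) (L J : List ℕ) : Prop where
  length_eq : J.length = L.length + 1
  admissible : LambdaAdmissible J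
  sum_eq : J.sum = m + L.sum
  getLastD_le : J.getLastD 0 ≤ L.getLastD m
  two_mul_getLastD_le : 2 * J.getLastD 0 ≤ 2 * m + L.sum

namespace IsLamTerm

theorem ne_nil {m : ℕ} {L J : List ℕ} (h : IsLamTerm m L J) : J ≠ [] := by
  rintro rfl
  simpa using h.length_eq

theorem singleton (m : ℕ) : IsLamTerm m [] [m] :=
  ⟨rfl, List.isChain_singleton m, by simp, le_rfl, by simp⟩

theorem cons_of_le {m a : ℕ} {L : List ℕ} (hL : LambdaAdmissible (a :: L)) (ha : a ≤ 2 * m) :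
    IsLamTerm m (a :: L) (m :: a :: L) := by
  have hJ : LambdaAdmissible (m :: a :: L) := List.isChain_cons_cons.2 ⟨ha, hL⟩
  have hlast := hJ.getLastD_le_add_sum_dropLast
  have hsum := List.sum_dropLast_add_getLastD (List.cons_ne_nil m (a :: L)) 0
  refine ⟨rfl, hJ, rfl, le_rfl, ?_⟩
  simp only [List.getLastD_cons, List.sum_cons] at hlast hsum ⊢
  omega

theorem of_adem {m j t : ℕ} {L K J : List ℕ} (ht : 2 * t + 1 ≤ j)
    (hK : IsLamTerm (2 * m + 1 + t) L K) (hJ : IsLamTerm (m + j - t) K J) :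
    IsLamTerm m ((2 * m + 1 + j) :: L) J := by
  have hJK : J.getLastD 0 ≤ K.getLastD 0 :=
    K.getLastD_eq_getLastD_of_ne_nil hK.ne_nil _ 0 ▸ hJ.getLastD_le
  have hKL : L.getLastD (2 * m + 1 + t) ≤ L.getLastD (2 * m + 1 + j) :=
    List.getLastD_mono_default (by omega)
  refine ⟨by simp [hJ.length_eq, hK.length_eq], hJ.admissible, ?_, ?_, ?_⟩
  · rw [hJ.sum_eq, hK.sum_eq, List.sum_cons]
    omega
  · rw [List.getLastD_cons]
    exact hJK.trans (hK.getLastD_le.trans hKL)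
  · have := hK.two_mul_getLastD_le
    simp only [List.sum_cons]
    omega

end IsLamTerm

theorem lam_mul_lamProd_mem_span (m : ℕ) {L : List ℕ} (hL : LambdaAdmissible L) :
    lam m * lamProd L ∈ span (ZMod 2) (lamProd '' {J | IsLamTerm m L J}) := by
  induction hn : L.sum using Nat.strong_induction_on generalizing m L with
  | _ n ih =>
  match L, hL with
  | [], _ => exact subset_span ⟨[m], IsLamTerm.singleton m, by simp [lamProd]⟩
  | a :: L, hL =>
    by_cases ha : a ≤ 2 * m
    · exact subset_span ⟨m :: a :: L, IsLamTerm.cons_of_le hL ha, lamProd_cons _ _⟩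
    obtain ⟨j, rfl⟩ : ∃ j, a = 2 * m + 1 + j := ⟨a - (2 * m + 1), by omega⟩
    rw [lamProd_cons, ← mul_assoc, lam_mul_lam_adem, Finset.sum_mul]
    refine sum_mem fun t ht => ?_
    have htj := Finset.mem_range.1 ht
    by_cases hc : ((j - t - 1).choose t : ZMod 2) = 0
    · simp [hc]
    have h2t : 2 * t + 1 ≤ j := by
      by_contra! h
      exact hc (by rw [Nat.choose_eq_zero_of_lt (by omega), Nat.cast_zero])
    rw [smul_mul_assoc, mul_assoc]
    refine smul_mem _ _ ?_
    have hsum : ((2 * m + 1 + j) :: L).sum = 2 * m + 1 + j + L.sum := List.sum_cons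
    refine (span (ZMod 2) _).apply_mem_of_mem_span_image (LinearMap.mulLeft (ZMod 2) _)
      (ih L.sum (by omega) (2 * m + 1 + t) (List.isChain_cons.1 hL).2 rfl) fun K hK => ?_
    refine span_mono (Set.image_mono fun J hJ => IsLamTerm.of_adem h2t hK hJ) ?_
    exact ih K.sum (by rw [hK.sum_eq]; omega) (m + j - t) hK.admissible rfl

theorem lam_mul_admissible_last_index_bound_general (i : ℕ) (I : List ℕ)
    (hadm : LambdaAdmissible I) :
    ∃ S : Finset (List ℕ),
      (∀ J ∈ S, J.length = I.length + 1 ∧ LambdaAdmissible J ∧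
        J.getLastD 0 ≤ i + J.dropLast.sum) ∧
      lam i * lamProd I = ∑ J ∈ S, lamProd J := by
  obtain ⟨S, hS, heq⟩ :=
    exists_finset_sum_eq_of_mem_span_image_zmod_two (lam_mul_lamProd_mem_span i hadm)
  refine ⟨S, fun J hJ => ?_, heq⟩
  have hterm : IsLamTerm i I J := hS hJ
  have hsplit := List.sum_dropLast_add_getLastD hterm.ne_nil 0
  have hsum := hterm.sum_eq
  have hbound := hterm.two_mul_getLastD_le
  exact ⟨hterm.length_eq, hterm.admissible, by omega⟩

/-- Let `λ_I` be an admissible monomial of length `s ≥ 1` in the mod 2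
lambda algebra, and write `λ_i λ_I` as a sum of admissible monomials `λ_J` of length
`s + 1`.  Then every such `λ_J` satisfies `i + J(1) + ⋯ + J(s) ≥ J(s+1)`. -/
theorem lam_mul_admissible_last_index_bound (i : ℕ) (I : List ℕ)
    (hne : I ≠ []) (hadm : LambdaAdmissible I) :
    ∃ S : Finset (List ℕ),
      (∀ J ∈ S, J.length = I.length + 1 ∧ LambdaAdmissible J ∧
        J.getLastD 0 ≤ i + J.dropLast.sum) ∧
      lam i * lamProd I = ∑ J ∈ S, lamProd J :=
  lam_mul_admissible_last_index_bound_general i I hadm
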